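/- For every continuously differentiable function f : [0,∞) → ℝ and every t ≥ 0, one has ∫_t^∞ e^{-s} f(s)² ds ≤ 2 e^{-t} f(t)² + 4 ∫_t^∞ e^{-s} f'(s)² ds, where both integrals are understood with values in [0,∞], so that the inequality holds regardless of the finiteness of the integrals. -/

import Mathlib

/-!
Since `(e^{-s} f²)' = e^{-s} (2 f f' - f²)`, completing the square gives pointwise
`e^{-s} f² ≤ 4 e^{-s} f'² - 2 (e^{-s} f²)'`, the difference being `e^{-s} (f - 2 f')²`.
Integrating over `[t, T]` and dropping `-2 e^{-T} f(T)² ≤ 0` gives the bound on every finite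
interval, and `T → ∞` follows by continuity of the lower integral along increasing sets.
-/

open MeasureTheory Set Real
open scoped ENNReal

theorem setLIntegral_Ioi_le_of_forall_Ioc_le {μ : Measure ℝ} {g : ℝ → ℝ≥0∞} {a : ℝ} {C : ℝ≥0∞}
    (h : ∀ b, a ≤ b → ∫⁻ x in Ioc a b, g x ∂μ ≤ C) : ∫⁻ x in Ioi a, g x ∂μ ≤ C := by
  have hcover : ⋃ n : ℕ, Ioc a (a + n) = Ioi a :=
    iUnion_Ioc_eq_Ioi_self_iff.2 fun x _ =>
      (exists_nat_ge (x - a)).imp fun _ hn => by linarith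
  have hdir : Directed (· ⊆ ·) fun n : ℕ => Ioc a (a + n) :=
    Monotone.directed_le fun m n hmn => Ioc_subset_Ioc_right (by gcongr)
  rw [← hcover, setLIntegral_iUnion_of_directed g hdir]
  exact iSup_le fun n => h _ (le_add_of_nonneg_right n.cast_nonneg)

theorem lintegral_Ioc_ofReal_eq_ofReal_intervalIntegral {g : ℝ → ℝ} {a b : ℝ} (hab : a ≤ b)
    (hg : ContinuousOn g (Icc a b)) (hg0 : ∀ x ∈ Icc a b, 0 ≤ g x) :
    ∫⁻ x in Ioc a b, ENNReal.ofReal (g x) = ENNReal.ofReal (∫ x in a..b, g x) := by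
  rw [intervalIntegral.integral_of_le hab, ofReal_integral_eq_lintegral_ofReal]
  · exact hg.integrableOn_Icc.mono_set Ioc_subset_Icc_self
  · exact (ae_restrict_iff' measurableSet_Ioc).2
      (.of_forall fun x hx => hg0 x (Ioc_subset_Icc_self hx))

theorem hasDerivAt_exp_neg_mul_sq {f : ℝ → ℝ} {f' x : ℝ} (hf : HasDerivAt f f' x) :
    HasDerivAt (fun s => exp (-s) * f s ^ 2) (exp (-x) * (2 * f x * f' - f x ^ 2)) x :=
  (((hasDerivAt_neg x).exp).mul (hf.pow 2)).congr_deriv (by simp; ring)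

theorem integral_exp_neg_mul_sq_le {f f' : ℝ → ℝ} {a b : ℝ} (hab : a ≤ b)
    (hf : ContinuousOn f (Icc a b)) (hf' : ContinuousOn f' (Icc a b))
    (hderiv : ∀ x ∈ Ioo a b, HasDerivAt f (f' x) x) :
    ∫ x in a..b, exp (-x) * f x ^ 2
      ≤ 2 * exp (-a) * f a ^ 2 + 4 * ∫ x in a..b, exp (-x) * f' x ^ 2 := by
  set G : ℝ → ℝ := fun x => exp (-x) * (2 * f x * f' x - f x ^ 2)
  have hGint : IntervalIntegrable G volume a b :=
    ContinuousOn.intervalIntegrable_of_Icc hab (by fun_prop)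
  have hf'int : IntervalIntegrable (fun x => exp (-x) * f' x ^ 2) volume a b :=
    ContinuousOn.intervalIntegrable_of_Icc hab (by fun_prop)
  have hftc : ∫ x in a..b, G x = exp (-b) * f b ^ 2 - exp (-a) * f a ^ 2 :=
    intervalIntegral.integral_eq_sub_of_hasDerivAt_of_le hab (by fun_prop)
      (fun x hx => hasDerivAt_exp_neg_mul_sq (hderiv x hx)) hGint
  calc ∫ x in a..b, exp (-x) * f x ^ 2
      ≤ ∫ x in a..b, (4 * (exp (-x) * f' x ^ 2) - 2 * G x) := by
        refine intervalIntegral.integral_mono_on hab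
          (ContinuousOn.intervalIntegrable_of_Icc hab (by fun_prop))
          ((hf'int.const_mul 4).sub (hGint.const_mul 2)) fun x _ => ?_
        nlinarith [mul_nonneg (exp_pos (-x)).le (sq_nonneg (f x - 2 * f' x))]
    _ = 4 * (∫ x in a..b, exp (-x) * f' x ^ 2)
          - 2 * (exp (-b) * f b ^ 2 - exp (-a) * f a ^ 2) := by
        rw [intervalIntegral.integral_sub (hf'int.const_mul 4) (hGint.const_mul 2),
          intervalIntegral.integral_const_mul, intervalIntegral.integral_const_mul, hftc]
    _ ≤ 2 * exp (-a) * f a ^ 2 + 4 * ∫ x in a..b, exp (-x) * f' x ^ 2 := by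
        nlinarith [mul_nonneg (exp_pos (-b)).le (sq_nonneg (f b))]

theorem wide_poincare_weighted (f f' : ℝ → ℝ)
    (hderiv : ∀ s ∈ Set.Ici (0 : ℝ), HasDerivWithinAt f (f' s) (Set.Ici 0) s)
    (hcont : ContinuousOn f' (Set.Ici 0))
    (t : ℝ) (ht : 0 ≤ t) :
    (∫⁻ s in Set.Ioi t, ENNReal.ofReal (Real.exp (-s) * (f s) ^ 2))
      ≤ ENNReal.ofReal (2 * Real.exp (-t) * (f t) ^ 2)
        + 4 * ∫⁻ s in Set.Ioi t, ENNReal.ofReal (Real.exp (-s) * (f' s) ^ 2) := by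
  refine setLIntegral_Ioi_le_of_forall_Ioc_le fun T hT => ?_
  have hsub : Icc t T ⊆ Ici 0 := fun x hx => ht.trans hx.1
  have hf : ContinuousOn f (Icc t T) := fun x hx =>
    (hderiv x (hsub hx)).continuousWithinAt.mono hsub
  have hderiv' : ∀ x ∈ Ioo t T, HasDerivAt f (f' x) x := fun x hx =>
    (hderiv x (hsub (Ioo_subset_Icc_self hx))).hasDerivAt (Ici_mem_nhds (ht.trans_lt hx.1))
  have hf' : ContinuousOn f' (Icc t T) := hcont.mono hsub
  calc ∫⁻ s in Ioc t T, ENNReal.ofReal (exp (-s) * f s ^ 2)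
      = ENNReal.ofReal (∫ s in t..T, exp (-s) * f s ^ 2) :=
        lintegral_Ioc_ofReal_eq_ofReal_intervalIntegral hT (by fun_prop) fun _ _ => by positivity
    _ ≤ ENNReal.ofReal (2 * exp (-t) * f t ^ 2 + 4 * ∫ s in t..T, exp (-s) * f' s ^ 2) :=
        ENNReal.ofReal_le_ofReal (integral_exp_neg_mul_sq_le hT hf hf' hderiv')
    _ = ENNReal.ofReal (2 * exp (-t) * f t ^ 2)
          + 4 * ∫⁻ s in Ioc t T, ENNReal.ofReal (exp (-s) * f' s ^ 2) := by
        rw [lintegral_Ioc_ofReal_eq_ofReal_intervalIntegral hT (by fun_prop)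
            fun _ _ => by positivity,
          ENNReal.ofReal_add (by positivity)
            (mul_nonneg zero_le_four (intervalIntegral.integral_nonneg hT fun _ _ => by positivity)),
          ENNReal.ofReal_mul zero_le_four, ENNReal.ofReal_ofNat]
    _ ≤ _ := by gcongr; exact Ioc_subset_Ioi_self
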